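/- arXiv:math/0110001 — 3 statements merged into one kernel-verified Lean document; each statement's English description precedes it below -/
import Mathlib

section
/- Let u, v be words in signed letters and suppose ε_i(u v) = p and ε_j(u v) = q. Then ε_{ij}(u v) − ε_{ij}(v u) = ε_i(u v) ε_j(v) − ε_i(v) ε_j(u v), hence gcd(ε_i(uv), ε_j(uv)) divides ε_{ij}(u v) − ε_{ij}(v u). -/
/-- A word in signed letters `m_p^{±1}`: a list of (letter index, sign),
with sign `true` meaning `+1` and `false` meaning `-1`. -/
abbrev SWord (ℓ : ℕ) := List (Fin ℓ × Bool)

/-- The sign value of a boolean sign. -/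
def sgn (b : Bool) : ℤ := if b then 1 else -1

/-- `eps i w` is the exponent sum of the letter `m_i` in the word `w`. -/
def eps {ℓ : ℕ} (i : Fin ℓ) : SWord ℓ → ℤ
  | [] => 0
  | x :: t => (if x.1 = i then sgn x.2 else 0) + eps i t

/-- `epsPair i j w` is the signed count of ordered pairs of positions `p < q`
in `w` carrying `m_i^r` and `m_j^s` respectively, each contributing `r * s`. -/
def epsPair {ℓ : ℕ} (i j : Fin ℓ) : SWord ℓ → ℤ
  | [] => 0
  | x :: t => (if x.1 = i then sgn x.2 * eps j t else 0) + epsPair i j t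

/-- Formal inverse of a word: reverse the list and negate each sign. -/
def winv {ℓ : ℕ} (w : SWord ℓ) : SWord ℓ :=
  w.reverse.map (fun x => (x.1, !x.2))

/-- The word `m_i^p` for an integer `p`: `|p|` copies of `m_i^{sign p}`. -/
def zpowWord {ℓ : ℕ} (i : Fin ℓ) (p : ℤ) : SWord ℓ :=
  List.replicate p.natAbs (i, decide (0 ≤ p))

/-- The element of the free group represented by a word of signed letters. -/
def toFree {ℓ : ℕ} (w : SWord ℓ) : FreeGroup (Fin ℓ) :=
  (w.map (fun x => if x.2 then FreeGroup.of x.1 else (FreeGroup.of x.1)⁻¹)).prod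

lemma eps_append {ℓ : ℕ} (i : Fin ℓ) (u v : SWord ℓ) :
    eps i (u ++ v) = eps i u + eps i v := by
  induction u with
  | nil => simp [eps]
  | cons x t ih => simp [eps, ih]; ring

lemma epsPair_append {ℓ : ℕ} (i j : Fin ℓ) (u v : SWord ℓ) :
    epsPair i j (u ++ v) = epsPair i j u + epsPair i j v + eps i u * eps j v := by
  induction u with
  | nil => simp [epsPair, eps]
  | cons x t ih =>
    simp only [List.cons_append, epsPair, eps, ih, eps_append]
    by_cases h : x.1 = i <;> simp [h, ih, eps_append] <;> ring

/-- ε_{ij}(u v) − ε_{ij}(v u) = ε_i(u v) ε_j(v) − ε_i(v) ε_j(u v), hence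
gcd(ε_i(uv), ε_j(uv)) divides ε_{ij}(u v) − ε_{ij}(v u): ε_{ij} is well
defined modulo gcd(ε_i, ε_j) under cyclic permutation. -/
theorem epsPair_cyclic_mod_gcd {ℓ : ℕ} (i j : Fin ℓ) (u v : SWord ℓ) :
    epsPair i j (u ++ v) - epsPair i j (v ++ u) =
      eps i (u ++ v) * eps j v - eps i v * eps j (u ++ v) ∧
    ((Int.gcd (eps i (u ++ v)) (eps j (u ++ v)) : ℤ) ∣
      epsPair i j (u ++ v) - epsPair i j (v ++ u)) := by
  have h : epsPair i j (u ++ v) - epsPair i j (v ++ u) =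
      eps i (u ++ v) * eps j v - eps i v * eps j (u ++ v) := by
    simp only [epsPair_append, eps_append]; ring
  refine ⟨h, h ▸ ?_⟩
  exact dvd_sub (Dvd.dvd.mul_right (Int.gcd_dvd_left ..) _)
    (Dvd.dvd.mul_left (Int.gcd_dvd_right ..) _)
end

section
/- The invariants ε_i and ε_{ij} (for i ≠ j) are invariant under free reduction: if the word w' is obtained from w by deleting an adjacent pair of letters m_p^{+1} m_p^{-1} or m_p^{-1} m_p^{+1}, then ε_i(w') = ε_i(w) and ε_{ij}(w') = ε_{ij}(w). Hence ε_i and ε_{ij} descend to well-defined functions on the free group F(m_1, ..., m_ℓ). -/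
/-!
The triple `(ε_i, ε_j, ε_{ij})` of a word is its image under the homomorphism from the free
monoid on the signed letters to the discrete Heisenberg group sending `m_k^{±1}` to
`(±[k = i], ±[k = j], 0)`; for `i ≠ j` this sends `m_k^{-1}` to the inverse of the image of
`m_k`. Hence the map factors through the free group `F(m_1, …, m_ℓ)`, and invariance under
free reduction follows because a cancelling pair represents the identity there.
-/

/-- Upper unitriangular integer matrices `[[1, x, z], [0, 1, y], [0, 0, 1]]`. -/
@[ext]
structure Heisenberg where
  x : ℤ
  y : ℤ
  z : ℤ

namespace Heisenberg

instance : Mul Heisenberg := ⟨fun a b => ⟨a.x + b.x, a.y + b.y, a.z + b.z + a.x * b.y⟩⟩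
instance : One Heisenberg := ⟨⟨0, 0, 0⟩⟩
instance : Inv Heisenberg := ⟨fun a => ⟨-a.x, -a.y, -a.z + a.x * a.y⟩⟩

@[simp] lemma mul_def (a b : Heisenberg) :
    a * b = ⟨a.x + b.x, a.y + b.y, a.z + b.z + a.x * b.y⟩ := rfl
@[simp] lemma one_def : (1 : Heisenberg) = ⟨0, 0, 0⟩ := rfl
@[simp] lemma inv_def (a : Heisenberg) : a⁻¹ = ⟨-a.x, -a.y, -a.z + a.x * a.y⟩ := rfl

instance : Group Heisenberg where
  mul_assoc a b c := by ext <;> simp only [mul_def] <;> ring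
  one_mul a := by ext <;> simp
  mul_one a := by ext <;> simp
  inv_mul_cancel a := by ext <;> simp

end Heisenberg

section Words

variable {ℓ : ℕ}

def genHeisenberg (i j k : Fin ℓ) : Heisenberg :=
  ⟨if k = i then 1 else 0, if k = j then 1 else 0, 0⟩

lemma toFree_cons (x : Fin ℓ × Bool) (t : SWord ℓ) :
    toFree (x :: t) = (if x.2 then FreeGroup.of x.1 else (FreeGroup.of x.1)⁻¹) * toFree t := by
  simp [toFree]

lemma toFree_append (a c : SWord ℓ) : toFree (a ++ c) = toFree a * toFree c := by
  simp [toFree]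

lemma toFree_cancel_pair (a c : SWord ℓ) (p : Fin ℓ) (b : Bool) :
    toFree (a ++ (p, b) :: (p, !b) :: c) = toFree (a ++ c) := by
  cases b <;> simp [toFree_append, toFree_cons]

lemma lift_genHeisenberg_letter {i j : Fin ℓ} (hij : i ≠ j) (k : Fin ℓ) (b : Bool) :
    FreeGroup.lift (genHeisenberg i j) (if b then FreeGroup.of k else (FreeGroup.of k)⁻¹) =
      ⟨if k = i then sgn b else 0, if k = j then sgn b else 0, 0⟩ := by
  have hk : ¬(k = i ∧ k = j) := fun ⟨hi, hj⟩ => hij (hi.symm.trans hj)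
  cases b <;> by_cases hi : k = i <;> by_cases hj : k = j <;>
    simp_all [genHeisenberg, sgn]

theorem lift_genHeisenberg_toFree {i j : Fin ℓ} (hij : i ≠ j) (w : SWord ℓ) :
    FreeGroup.lift (genHeisenberg i j) (toFree w) = ⟨eps i w, eps j w, epsPair i j w⟩ := by
  induction w with
  | nil => rfl
  | cons x t ih =>
    rw [toFree_cons, map_mul, ih, lift_genHeisenberg_letter hij]
    ext <;> simp only [Heisenberg.mul_def, eps, epsPair]
    split_ifs <;> ring

end Words

/-- ε_i and ε_{ij} (for i ≠ j) are invariant under free reduction (deleting an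
adjacent cancelling pair `m_p^{+1} m_p^{-1}` or `m_p^{-1} m_p^{+1}`), and hence
descend to well-defined functions on the free group. -/
theorem eps_epsPair_free_reduction {ℓ : ℕ} (i j : Fin ℓ) (hij : i ≠ j) :
    (∀ (a c : SWord ℓ) (p : Fin ℓ) (b : Bool),
      eps i (a ++ c) = eps i (a ++ (p, b) :: (p, !b) :: c) ∧
      epsPair i j (a ++ c) = epsPair i j (a ++ (p, b) :: (p, !b) :: c)) ∧
    (∃ E : FreeGroup (Fin ℓ) → ℤ, ∀ w : SWord ℓ, E (toFree w) = eps i w) ∧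
    (∃ E₂ : FreeGroup (Fin ℓ) → ℤ, ∀ w : SWord ℓ, E₂ (toFree w) = epsPair i j w) := by
  have hlift := lift_genHeisenberg_toFree hij
  refine ⟨fun a c p b => ?_, ⟨fun g => (FreeGroup.lift (genHeisenberg i j) g).x, by simp [hlift]⟩,
    ⟨fun g => (FreeGroup.lift (genHeisenberg i j) g).z, by simp [hlift]⟩⟩
  have h := congrArg (FreeGroup.lift (genHeisenberg i j)) (toFree_cancel_pair a c p b)
  rw [hlift, hlift, Heisenberg.mk.injEq] at h
  exact ⟨h.1.symm, h.2.2.symm⟩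
end

section
/- Antisymmetry of the triple invariant mod linking numbers: let w_i, w_j, w_k be words in signed letters, and set μ_{pq} = ε_p(w_q) for p ≠ q. Suppose μ_{pq} = μ_{qp} for all pairs, and let δ = gcd(μ_{ij}, μ_{jk}, μ_{ik}). Define m_{ijk} = ε_{ij}(w_k) + ε_{jk}(w_i) + ε_{ki}(w_j). Then m_{ijk} + m_{jik} ≡ 0 (mod δ). -/
/-! Every pair of occurrences of `m_p` and `m_q` in a word is counted exactly once by
`ε_{pq}` or by `ε_{qp}`, so `ε_{pq} + ε_{qp} = ε_p ε_q`. Hence `m_{ijk} + m_{jik}` is a sum of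
three products of linking numbers, each divisible by `δ`. -/

theorem epsPair_add_epsPair_swap {ℓ : ℕ} {i j : Fin ℓ} (hij : i ≠ j) (w : SWord ℓ) :
    epsPair i j w + epsPair j i w = eps i w * eps j w := by
  induction w with
  | nil => simp [epsPair, eps]
  | cons x t ih =>
    simp only [epsPair, eps]
    split_ifs <;> subst_vars <;> first | contradiction | linear_combination ih

theorem m_antisymmetric_general {ℓ : ℕ} (i j k : Fin ℓ)
    (hij : i ≠ j) (hjk : j ≠ k) (hik : i ≠ k)
    (wi wj wk : SWord ℓ)
    (hsym_ij : eps i wj = eps j wi) :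
    ((Int.gcd (Int.gcd (eps i wj) (eps j wk)) (eps i wk) : ℤ)) ∣
      ((epsPair i j wk + epsPair j k wi + epsPair k i wj) +
       (epsPair j i wk + epsPair i k wj + epsPair k j wi)) := by
  set δ : ℤ := ↑(Int.gcd (Int.gcd (eps i wj) (eps j wk)) (eps i wk))
  have hδij : δ ∣ eps i wj := (Int.gcd_dvd_left _ _).trans (Int.gcd_dvd_left _ _)
  have hδik : δ ∣ eps i wk := Int.gcd_dvd_right _ _
  have hsum : (epsPair i j wk + epsPair j k wi + epsPair k i wj) +
      (epsPair j i wk + epsPair i k wj + epsPair k j wi) =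
      eps i wk * eps j wk + eps i wj * eps k wi + eps k wj * eps i wj := by
    linear_combination epsPair_add_epsPair_swap hij wk + epsPair_add_epsPair_swap hjk wi +
      epsPair_add_epsPair_swap hik.symm wj - eps k wi * hsym_ij
  rw [hsum]
  exact dvd_add (dvd_add (hδik.mul_right _) (hδij.mul_right _)) (hδij.mul_left _)

/-- Antisymmetry of the triple invariant mod δ: with μ_{pq} = ε_p(w_q)
symmetric and δ = gcd(μ_{ij}, μ_{jk}, μ_{ik}),
m_{ijk} + m_{jik} ≡ 0 (mod δ). -/
theorem m_antisymmetric {ℓ : ℕ} (i j k : Fin ℓ)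
    (hij : i ≠ j) (hjk : j ≠ k) (hik : i ≠ k)
    (wi wj wk : SWord ℓ)
    (hsym_ij : eps i wj = eps j wi)
    (hsym_jk : eps j wk = eps k wj)
    (hsym_ik : eps i wk = eps k wi) :
    ((Int.gcd (Int.gcd (eps i wj) (eps j wk)) (eps i wk) : ℤ)) ∣
      ((epsPair i j wk + epsPair j k wi + epsPair k i wj) +
       (epsPair j i wk + epsPair i k wj + epsPair k j wi)) :=
  m_antisymmetric_general i j k hij hjk hik wi wj wk hsym_ij
end
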